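/- Let X be a Banach space with modulus of smoothness ρ(X,u) ≤ γ u^q for some 1 < q ≤ 2, and let D_n be a normalized system of n elements in X. Then the entropy numbers of the octahedron A_1(D_n) = { Σ c_j g_j : Σ |c_j| ≤ 1 } satisfy ε_k(A_1(D_n), X) ≤ C(q,γ) ( log(2n/k)/k )^{1 - 1/q} for k = 1,...,n. -/

import Mathlib

/-!
Greedy approximation driven by smoothness, a deterministic form of Maurey's lemma. Let `F` be
a norming functional of the residual `s`. Since `f ∈ A_1(D_n)` lies in the convex hull of the
signed atoms `0, ±g_j`, some atom `a` has `F a ≤ F f`; then `F (a - f) ≤ 0`, so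
`‖s - (a - f)‖ ≥ ‖s‖` and the modulus of smoothness gives `‖s + (a - f)‖^q ≤ ‖s‖^q + B(q, γ)`.
After `m` steps, `f` lies within `B^{1/q} m^{1/q - 1}` of an average of `m` atoms. There are
`C(2n+m, m)` such averages, at most `2^k` when `m ≍ k / log(2n/k)`; when `k ≲ log(2n/k)`,
`ε_k ≤ 1` suffices.
-/

open scoped BigOperators

/-- The modulus of smoothness `ρ(X, u)` of a normed space `X`. -/
noncomputable def modSmooth (X : Type*) [NormedAddCommGroup X] [NormedSpace ℝ X] (u : ℝ) : ℝ :=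
  sSup {r : ℝ | ∃ x y : X, ‖x‖ = 1 ∧ ‖y‖ = 1 ∧ r = (‖x + u • y‖ + ‖x - u • y‖) / 2 - 1}

/-- The `k`-th dyadic entropy number of a set `W` in a normed space. -/
noncomputable def entropyNum {X : Type*} [NormedAddCommGroup X] (W : Set X) (k : ℕ) : ℝ :=
  sInf {ε : ℝ | 0 < ε ∧ ∃ y : Fin (2 ^ k) → X, ∀ w ∈ W, ∃ j, ‖w - y j‖ ≤ ε}

open Real

/-- With `c = 8γ`: a residual with `‖s‖^q ≤ c` grows to at most `(c^{1/q} + 2)^q` in one greedy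
step, a larger one gains at most `3c` in `q`-th power. -/
noncomputable def smoothStepConst (q γ : ℝ) : ℝ := ((8 * γ) ^ q⁻¹ + 2) ^ q + 24 * γ

lemma one_le_smoothStepConst {q γ : ℝ} (hq : 0 ≤ q) (hγ : 0 ≤ γ) : 1 ≤ smoothStepConst q γ := by
  have : 1 ≤ ((8 * γ) ^ q⁻¹ + 2) ^ q :=
    one_le_rpow (by linarith [rpow_nonneg (by positivity : 0 ≤ 8 * γ) q⁻¹]) hq
  unfold smoothStepConst
  linarith

lemma one_add_rpow_le_one_add_three_mul {u q : ℝ} (hu₀ : 0 ≤ u) (hu₁ : u ≤ 1) (hq : q ≤ 2) :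
    (1 + u) ^ q ≤ 1 + 3 * u :=
  calc (1 + u) ^ q ≤ (1 + u) ^ (2 : ℝ) := rpow_le_rpow_of_exponent_le (by linarith) hq
    _ = 1 + 2 * u + u * u := by rw [rpow_two]; ring
    _ ≤ 1 + 3 * u := by nlinarith

section Smoothness

variable {X : Type*} [NormedAddCommGroup X] [NormedSpace ℝ X]

lemma le_modSmooth {x y : X} (hx : ‖x‖ = 1) (hy : ‖y‖ = 1) (u : ℝ) :
    (‖x + u • y‖ + ‖x - u • y‖) / 2 - 1 ≤ modSmooth X u := by
  refine le_csSup ⟨|u|, ?_⟩ ⟨x, y, hx, hy, rfl⟩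
  rintro r ⟨x, y, hx, hy, rfl⟩
  have h₁ := norm_add_le x (u • y)
  have h₂ := norm_sub_le x (u • y)
  rw [norm_smul, hx, hy, Real.norm_eq_abs, mul_one] at h₁ h₂
  linarith

lemma norm_add_add_norm_sub_le_modSmooth {x y : X} (hx : x ≠ 0) (hy : y ≠ 0) :
    ‖x + y‖ + ‖x - y‖ ≤ 2 * ‖x‖ * (1 + modSmooth X (‖y‖ / ‖x‖)) := by
  have hx' : 0 < ‖x‖ := norm_pos_iff.2 hx
  have hy' : 0 < ‖y‖ := norm_pos_iff.2 hy
  have hscale : (‖y‖ / ‖x‖) • ‖y‖⁻¹ • y = ‖x‖⁻¹ • y := by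
    rw [smul_smul]; congr 1; field_simp
  have key := le_modSmooth (norm_smul_inv_norm (𝕜 := ℝ) hx) (norm_smul_inv_norm (𝕜 := ℝ) hy)
    (‖y‖ / ‖x‖)
  simp only [RCLike.ofReal_real_eq_id, id, hscale, ← smul_add, ← smul_sub, norm_smul,
    norm_inv, norm_norm] at key
  calc ‖x + y‖ + ‖x - y‖ = ‖x‖ * (‖x‖⁻¹ * ‖x + y‖ + ‖x‖⁻¹ * ‖x - y‖) := by field_simp
    _ ≤ ‖x‖ * (2 * (1 + modSmooth X (‖y‖ / ‖x‖))) := by gcongr; linarith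
    _ = 2 * ‖x‖ * (1 + modSmooth X (‖y‖ / ‖x‖)) := by ring

lemma norm_add_rpow_le_of_modSmooth_le {q γ : ℝ} (hq₀ : 0 < q) (hq₂ : q ≤ 2) (hγ : 0 < γ)
    (hsm : ∀ u : ℝ, 0 < u → modSmooth X u ≤ γ * u ^ q) {s y : X} {F : StrongDual ℝ X}
    (hF : ‖F‖ ≤ 1) (hFs : F s = ‖s‖) (hFy : F y ≤ 0) (hy : ‖y‖ ≤ 2) :
    ‖s + y‖ ^ q ≤ ‖s‖ ^ q + smoothStepConst q γ := by
  set t := ‖s‖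
  set c := 8 * γ with hc
  have hc₀ : 0 < c := by positivity
  have htq : 0 ≤ t ^ q := by positivity
  have hB : smoothStepConst q γ = (c ^ q⁻¹ + 2) ^ q + 3 * c := by
    rw [smoothStepConst, hc]; ring
  rcases le_or_gt (t ^ q) c with hsmall | hlarge
  · have ht_le : t ≤ c ^ q⁻¹ := (le_rpow_inv_iff_of_pos (norm_nonneg _) hc₀.le hq₀).2 hsmall
    have : ‖s + y‖ ^ q ≤ (c ^ q⁻¹ + 2) ^ q :=
      rpow_le_rpow (norm_nonneg _) (by linarith [norm_add_le s y]) hq₀.le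
    linarith
  rcases eq_or_ne y 0 with rfl | hy₀
  · rw [add_zero]; linarith [one_le_smoothStepConst hq₀.le hγ.le]
  have ht₀ : 0 < t := by
    by_contra! h
    rw [le_antisymm h (norm_nonneg s), zero_rpow hq₀.ne'] at hlarge
    linarith
  have hs₀ : s ≠ 0 := norm_pos_iff.1 ht₀
  have hsy : t ≤ ‖s - y‖ :=
    calc t = F s := hFs.symm
      _ ≤ F (s - y) := by rw [map_sub]; linarith
      _ ≤ ‖F‖ * ‖s - y‖ := (le_abs_self _).trans (F.le_opNorm _)
      _ ≤ ‖s - y‖ := mul_le_of_le_one_left (norm_nonneg _) hF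
  have hmod : γ * (‖y‖ / t) ^ q ≤ c / t ^ q / 2 := by
    have h₁ : (‖y‖ / t) ^ q ≤ (2 / t) ^ q := by gcongr
    have h₂ : (2 : ℝ) ^ q ≤ 4 := by
      calc (2 : ℝ) ^ q ≤ 2 ^ (2 : ℝ) := rpow_le_rpow_of_exponent_le one_le_two hq₂
        _ = 4 := by norm_num
    rw [div_rpow zero_le_two ht₀.le] at h₁
    calc γ * (‖y‖ / t) ^ q ≤ γ * (4 / t ^ q) := by gcongr; exact h₁.trans (by gcongr)
      _ = c / t ^ q / 2 := by rw [hc]; ring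
  set u := c / t ^ q with hu
  have hu₀ : 0 ≤ u := by positivity
  have hu₁ : u ≤ 1 := (div_le_one (by positivity)).2 hlarge.le
  have hnorm : ‖s + y‖ ≤ t * (1 + u) := by
    have hsmooth := norm_add_add_norm_sub_le_modSmooth hs₀ hy₀
    have hρ := hsm _ (div_pos (norm_pos_iff.2 hy₀) ht₀)
    nlinarith
  calc ‖s + y‖ ^ q ≤ (t * (1 + u)) ^ q := rpow_le_rpow (norm_nonneg _) hnorm hq₀.le
    _ = t ^ q * (1 + u) ^ q := mul_rpow ht₀.le (by positivity)
    _ ≤ t ^ q * (1 + 3 * u) := by gcongr; exact one_add_rpow_le_one_add_three_mul hu₀ hu₁ hq₂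
    _ = t ^ q + 3 * c := by rw [hu]; field_simp
    _ ≤ t ^ q + smoothStepConst q γ := by
        rw [hB]; linarith [rpow_nonneg (by positivity : 0 ≤ c ^ q⁻¹ + 2) q]

end Smoothness

section Octahedron

variable {X : Type*} [NormedAddCommGroup X] {n : ℕ}

def signedAtom (g : Fin n → X) : Option (Fin n × Bool) → X
  | none => 0
  | some (j, true) => g j
  | some (j, false) => -g j

lemma norm_signedAtom_le {g : Fin n → X} (hg : ∀ j, ‖g j‖ ≤ 1) (o : Option (Fin n × Bool)) :
    ‖signedAtom g o‖ ≤ 1 := by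
  rcases o with _ | ⟨j, _ | _⟩ <;> simp [signedAtom, hg]

variable [NormedSpace ℝ X]

def octahedron (g : Fin n → X) : Set X :=
  {f | ∃ c : Fin n → ℝ, ∑ j, |c j| ≤ 1 ∧ f = ∑ j, c j • g j}

lemma octahedron_subset_closedBall {g : Fin n → X} (hg : ∀ j, ‖g j‖ ≤ 1) :
    octahedron g ⊆ Metric.closedBall 0 1 := by
  rintro _ ⟨c, hc, rfl⟩
  rw [mem_closedBall_zero_iff]
  calc ‖∑ j, c j • g j‖ ≤ ∑ j, ‖c j • g j‖ := norm_sum_le _ _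
    _ ≤ ∑ j, |c j| := by
        gcongr with j
        rw [norm_smul, Real.norm_eq_abs]
        exact mul_le_of_le_one_right (abs_nonneg _) (hg j)
    _ ≤ 1 := hc

lemma exists_signedAtom_apply_le {g : Fin n → X} {f : X} (hf : f ∈ octahedron g)
    (φ : X →ₗ[ℝ] ℝ) : ∃ o, φ (signedAtom g o) ≤ φ f := by
  obtain ⟨c, hc, rfl⟩ := hf
  obtain ⟨o, ho⟩ := Finite.exists_min fun o => φ (signedAtom g o)
  refine ⟨o, ?_⟩
  generalize signedAtom g o = a at ho ⊢
  have ha : 0 ≤ -φ a := by simpa [signedAtom] using ho none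
  have hφg : ∀ j, |φ (g j)| ≤ -φ a := fun j => by
    have hplus := ho (some (j, true))
    have hminus := ho (some (j, false))
    simp only [signedAtom, map_neg] at hplus hminus
    exact abs_le.2 ⟨by linarith, by linarith⟩
  have : -φ (∑ j, c j • g j) ≤ -φ a :=
    calc -φ (∑ j, c j • g j) ≤ |∑ j, c j * φ (g j)| := by simpa using neg_le_abs _
      _ ≤ ∑ j, |c j| * -φ a := by
          refine (Finset.abs_sum_le_sum_abs _ _).trans (Finset.sum_le_sum fun j _ => ?_)
          rw [abs_mul]
          exact mul_le_mul_of_nonneg_left (hφg j) (abs_nonneg _)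
      _ ≤ -φ a := by rw [← Finset.sum_mul]; exact mul_le_of_le_one_left ha hc
  linarith

end Octahedron

section Approximation

variable {X : Type*} [NormedAddCommGroup X] [NormedSpace ℝ X] {n : ℕ} {q γ : ℝ}

lemma exists_signedAtom_norm_add_rpow_le (hq₀ : 0 < q) (hq₂ : q ≤ 2) (hγ : 0 < γ)
    (hsm : ∀ u : ℝ, 0 < u → modSmooth X u ≤ γ * u ^ q) {g : Fin n → X} (hg : ∀ j, ‖g j‖ ≤ 1)
    {f : X} (hf : f ∈ octahedron g) (s : X) :
    ∃ o, ‖s + (signedAtom g o - f)‖ ^ q ≤ ‖s‖ ^ q + smoothStepConst q γ := by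
  obtain ⟨F, hF, hFs⟩ := exists_dual_vector'' ℝ s
  obtain ⟨o, ho⟩ := exists_signedAtom_apply_le hf F.toLinearMap
  refine ⟨o, norm_add_rpow_le_of_modSmooth_le hq₀ hq₂ hγ hsm hF hFs ?_ ?_⟩
  · simpa [map_sub] using ho
  · have := mem_closedBall_zero_iff.1 (octahedron_subset_closedBall hg hf)
    linarith [norm_sub_le (signedAtom g o) f, norm_signedAtom_le hg o]

theorem exists_sym_norm_sum_sub_rpow_le (hq₀ : 0 < q) (hq₂ : q ≤ 2) (hγ : 0 < γ)
    (hsm : ∀ u : ℝ, 0 < u → modSmooth X u ≤ γ * u ^ q) {g : Fin n → X} (hg : ∀ j, ‖g j‖ ≤ 1)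
    {f : X} (hf : f ∈ octahedron g) (m : ℕ) :
    ∃ s : Sym (Option (Fin n × Bool)) m,
      ‖((s : Multiset _).map (signedAtom g)).sum - (m : ℝ) • f‖ ^ q
        ≤ smoothStepConst q γ * m := by
  induction m with
  | zero => exact ⟨Sym.nil, by simp [zero_rpow hq₀.ne']⟩
  | succ m ih =>
    obtain ⟨s, hs⟩ := ih
    obtain ⟨o, ho⟩ := exists_signedAtom_norm_add_rpow_le hq₀ hq₂ hγ hsm hg hf
      (((s : Multiset _).map (signedAtom g)).sum - (m : ℝ) • f)
    refine ⟨o ::ₛ s, ?_⟩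
    have hsum : (((o ::ₛ s : Sym _ (m + 1)) : Multiset _).map (signedAtom g)).sum
        - ((m + 1 : ℕ) : ℝ) • f
        = ((s : Multiset _).map (signedAtom g)).sum - (m : ℝ) • f + (signedAtom g o - f) := by
      rw [Sym.coe_cons, Multiset.map_cons, Multiset.sum_cons]
      push_cast
      rw [add_smul, one_smul]
      abel
    rw [hsum]
    push_cast
    linarith

end Approximation

section Counting

lemma choose_le_exp_one_mul_div_pow (N : ℕ) {m : ℕ} (hm : 0 < m) :
    (N.choose m : ℝ) ≤ (exp 1 * N / m) ^ m := by
  have hm' : (0 : ℝ) < m := Nat.cast_pos.2 hm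
  calc (N.choose m : ℝ) ≤ (N : ℝ) ^ m / m.factorial := Nat.choose_le_pow_div m N
    _ = (m : ℝ) ^ m / m.factorial * ((N : ℝ) / m) ^ m := by rw [div_pow]; field_simp
    _ ≤ exp m * ((N : ℝ) / m) ^ m := by gcongr; exact pow_div_factorial_le_exp _ hm'.le m
    _ = (exp 1 * N / m) ^ m := by rw [← exp_one_pow, mul_div_assoc, mul_pow]

lemma choose_two_mul_add_le_two_pow {n k m : ℕ} {L : ℝ} (hL : 1 ≤ L)
    (hn : (2 * n : ℝ) = 2 ^ L * k) (hm : 0 < m) (hkm : (k : ℝ) ≤ 32 * L * m)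
    (hmk : 16 * L * m ≤ k) : (2 * n + m).choose m ≤ 2 ^ k := by
  set r : ℝ := 2 ^ L
  have hm' : (0 : ℝ) < m := Nat.cast_pos.2 hm
  have hr : 2 ≤ r := by simpa using rpow_le_rpow_of_exponent_le one_le_two hL
  have hLr : L ≤ r := by
    have := one_add_mul_self_le_rpow_one_add (s := 1) (by norm_num) hL
    norm_num at this
    linarith
  have hbase : exp 1 * ((2 * n + m : ℕ) : ℝ) / m ≤ r ^ 9 := by
    have hratio : ((2 * n + m : ℕ) : ℝ) / m ≤ 33 * L * r := by
      rw [div_le_iff₀ hm']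
      push_cast
      rw [hn]
      nlinarith
    have he : exp 1 ≤ 3 := (exp_one_lt_d9.trans (by norm_num)).le
    calc exp 1 * ((2 * n + m : ℕ) : ℝ) / m = exp 1 * (((2 * n + m : ℕ) : ℝ) / m) :=
          mul_div_assoc _ _ _
      _ ≤ 3 * (33 * L * r) := by gcongr
      _ ≤ 2 ^ 7 * r ^ 2 := by nlinarith
      _ ≤ r ^ 7 * r ^ 2 := by gcongr
      _ = r ^ 9 := by ring
  have hreal : ((2 * n + m).choose m : ℝ) ≤ 2 ^ (k : ℝ) :=
    calc ((2 * n + m).choose m : ℝ) ≤ (exp 1 * ((2 * n + m : ℕ) : ℝ) / m) ^ m :=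
          choose_le_exp_one_mul_div_pow _ hm
      _ ≤ (r ^ 9) ^ m := by gcongr
      _ = 2 ^ (9 * L * m) := by
          rw [← pow_mul, ← rpow_natCast, ← rpow_mul zero_le_two]
          push_cast
          ring_nf
      _ ≤ 2 ^ (k : ℝ) := rpow_le_rpow_of_exponent_le one_le_two (by nlinarith)
  rw [rpow_natCast] at hreal
  exact_mod_cast hreal

end Counting

section Entropy

lemma entropyNum_le_of_card_le {X ι : Type*} [NormedAddCommGroup X] [Fintype ι] {W : Set X}
    {k : ℕ} (hι : Fintype.card ι ≤ 2 ^ k) (y : ι → X) {ε : ℝ} (hε : 0 < ε)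
    (hW : ∀ w ∈ W, ∃ i, ‖w - y i‖ ≤ ε) : entropyNum W k ≤ ε := by
  obtain ⟨e⟩ : Nonempty (ι ↪ Fin (2 ^ k)) :=
    Function.Embedding.nonempty_of_card_le (by simpa using hι)
  refine csInf_le ⟨0, fun _ h => h.1.le⟩ ⟨hε, Function.extend e y 0, fun w hw => ?_⟩
  obtain ⟨i, hi⟩ := hW w hw
  exact ⟨e i, by rwa [e.injective.extend_apply]⟩

lemma entropyNum_le_of_subset_closedBall {X : Type*} [NormedAddCommGroup X] {W : Set X}
    {r : ℝ} (hr : 0 < r) (hW : W ⊆ Metric.closedBall 0 r) (k : ℕ) : entropyNum W k ≤ r :=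
  entropyNum_le_of_card_le (ι := Unit) (by simpa using Nat.one_le_two_pow) 0 hr
    fun w hw => ⟨(), by simpa using hW hw⟩

variable {X : Type*} [NormedAddCommGroup X] [NormedSpace ℝ X] {n : ℕ} {q γ : ℝ}

theorem entropyNum_octahedron_le_of_choose_le (hq₀ : 0 < q) (hq₂ : q ≤ 2) (hγ : 0 < γ)
    (hsm : ∀ u : ℝ, 0 < u → modSmooth X u ≤ γ * u ^ q) {g : Fin n → X} (hg : ∀ j, ‖g j‖ ≤ 1)
    {k m : ℕ} (hm : 0 < m) (hcard : (2 * n + m).choose m ≤ 2 ^ k) :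
    entropyNum (octahedron g) k ≤ smoothStepConst q γ ^ q⁻¹ * (m : ℝ)⁻¹ ^ (1 - q⁻¹) := by
  set B := smoothStepConst q γ
  have hB : 0 < B := one_pos.trans_le (one_le_smoothStepConst hq₀.le hγ.le)
  have hm' : (0 : ℝ) < m := Nat.cast_pos.2 hm
  have hcard' : Fintype.card (Sym (Option (Fin n × Bool)) m) ≤ 2 ^ k := by
    have : Fintype.card (Option (Fin n × Bool)) + m - 1 = 2 * n + m := by simp; omega
    rwa [Sym.card_sym_eq_multichoose, Nat.multichoose_eq, this]
  refine entropyNum_le_of_card_le hcard'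
    (fun s => (m : ℝ)⁻¹ • ((s : Multiset _).map (signedAtom g)).sum) (by positivity) ?_
  intro f hf
  obtain ⟨s, hs⟩ := exists_sym_norm_sum_sub_rpow_le hq₀ hq₂ hγ hsm hg hf m
  refine ⟨s, ?_⟩
  set S := ((s : Multiset _).map (signedAtom g)).sum
  have hS : ‖S - (m : ℝ) • f‖ ≤ (B * m) ^ q⁻¹ :=
    (le_rpow_inv_iff_of_pos (norm_nonneg _) (by positivity) hq₀).2 hs
  calc ‖f - (m : ℝ)⁻¹ • S‖ = ‖(m : ℝ)⁻¹ • (S - (m : ℝ) • f)‖ := by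
        rw [norm_sub_rev, smul_sub, smul_smul, inv_mul_cancel₀ hm'.ne', one_smul]
    _ = (m : ℝ)⁻¹ * ‖S - (m : ℝ) • f‖ := by rw [norm_smul, norm_inv, Real.norm_natCast]
    _ ≤ (m : ℝ)⁻¹ * (B * m) ^ q⁻¹ := by gcongr
    _ = B ^ q⁻¹ * (m : ℝ)⁻¹ ^ (1 - q⁻¹) := by
        rw [mul_rpow hB.le hm'.le, rpow_sub (inv_pos.2 hm'), rpow_one, inv_rpow hm'.le]
        field_simp

lemma entropyNum_octahedron_le_of_mul_log_le (hq₁ : 1 ≤ q) (hq₂ : q ≤ 2) (hγ : 0 < γ)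
    (hsm : ∀ u : ℝ, 0 < u → modSmooth X u ≤ γ * u ^ q) {g : Fin n → X} (hg : ∀ j, ‖g j‖ ≤ 1)
    {k : ℕ} {L : ℝ} (hL : 1 ≤ L) (hn : (2 * n : ℝ) = 2 ^ L * k) (hkL : 16 * L ≤ k) :
    entropyNum (octahedron g) k
      ≤ smoothStepConst q γ ^ q⁻¹ * (32 * L / k) ^ (1 - q⁻¹) := by
  have hL₀ : 0 < L := by linarith
  have hk : (0 : ℝ) < k := by linarith
  set m := ⌊(k : ℝ) / (16 * L)⌋₊
  have hx : 1 ≤ (k : ℝ) / (16 * L) := by rw [le_div_iff₀ (by positivity)]; linarith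
  have hm : 0 < m := Nat.floor_pos.2 hx
  have hm' : (1 : ℝ) ≤ m := Nat.one_le_cast.2 hm
  have hmk : 16 * L * m ≤ k := by
    have := Nat.floor_le (zero_le_one.trans hx)
    rwa [le_div_iff₀ (by positivity), mul_comm] at this
  have hkm : (k : ℝ) ≤ 32 * L * m := by
    have := Nat.lt_floor_add_one ((k : ℝ) / (16 * L))
    rw [div_lt_iff₀ (by positivity)] at this
    nlinarith
  calc entropyNum (octahedron g) k ≤ smoothStepConst q γ ^ q⁻¹ * (m : ℝ)⁻¹ ^ (1 - q⁻¹) :=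
        entropyNum_octahedron_le_of_choose_le (by linarith) hq₂ hγ hsm hg hm
          (choose_two_mul_add_le_two_pow hL hn hm hkm hmk)
    _ ≤ smoothStepConst q γ ^ q⁻¹ * (32 * L / k) ^ (1 - q⁻¹) := by
        have : 0 ≤ 1 - q⁻¹ := sub_nonneg.2 (inv_le_one_of_one_le₀ hq₁)
        have : 0 ≤ smoothStepConst q γ ^ q⁻¹ := rpow_nonneg (by
          linarith [one_le_smoothStepConst (by linarith : (0 : ℝ) ≤ q) hγ.le]) _
        gcongr
        rw [inv_le_comm₀ (by positivity) (by positivity), inv_div, div_le_iff₀ (by positivity)]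
        linarith

theorem entropyNum_octahedron_le (hq₁ : 1 ≤ q) (hq₂ : q ≤ 2) (hγ : 0 < γ)
    (hsm : ∀ u : ℝ, 0 < u → modSmooth X u ≤ γ * u ^ q) {g : Fin n → X} (hg : ∀ j, ‖g j‖ ≤ 1)
    {k : ℕ} (hk : 1 ≤ k) (hkn : k ≤ n) :
    entropyNum (octahedron g) k
      ≤ 32 * smoothStepConst q γ ^ q⁻¹ * (logb 2 (2 * n / k) / k) ^ (1 - q⁻¹) := by
  have hq₀ : 0 < q := by linarith
  set B := smoothStepConst q γ ^ q⁻¹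
  set L := logb 2 (2 * n / k)
  have hk' : (0 : ℝ) < k := Nat.cast_pos.2 hk
  have hratio : 2 ≤ 2 * (n : ℝ) / k := by
    rw [le_div_iff₀ hk']
    linarith [(Nat.cast_le (α := ℝ)).2 hkn]
  have hL : 1 ≤ L := by
    rw [le_logb_iff_rpow_le one_lt_two (by linarith), rpow_one]
    exact hratio
  have hB : 1 ≤ B := one_le_rpow (one_le_smoothStepConst hq₀.le hγ.le) (by positivity)
  have hbound : entropyNum (octahedron g) k ≤ B * (32 * L / k) ^ (1 - q⁻¹) := by
    rcases lt_or_ge (k : ℝ) (16 * L) with hsmall | hlarge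
    · calc entropyNum (octahedron g) k ≤ 1 :=
            entropyNum_le_of_subset_closedBall one_pos (octahedron_subset_closedBall hg) k
        _ ≤ B * (32 * L / k) ^ (1 - q⁻¹) :=
            one_le_mul_of_one_le_of_one_le hB (one_le_rpow (by rw [le_div_iff₀ hk']; linarith)
              (sub_nonneg.2 (inv_le_one_of_one_le₀ hq₁)))
    · refine entropyNum_octahedron_le_of_mul_log_le hq₁ hq₂ hγ hsm hg hL ?_ hlarge
      rw [rpow_logb two_pos (by norm_num) (by linarith)]
      field_simp
  calc entropyNum (octahedron g) k ≤ B * (32 * L / k) ^ (1 - q⁻¹) := hbound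
    _ = B * 32 ^ (1 - q⁻¹) * (L / k) ^ (1 - q⁻¹) := by
        rw [mul_div_assoc, mul_rpow (by norm_num) (by positivity)]
        ring
    _ ≤ 32 * B * (L / k) ^ (1 - q⁻¹) := by
        rw [mul_comm 32 B]
        gcongr
        exact rpow_le_self_of_one_le (by norm_num) (by linarith [inv_nonneg.2 hq₀.le])

end Entropy

/-- If `X` is `q`-smooth (`ρ(X,u) ≤ γ u^q`, `1 < q ≤ 2`) and `D_n` is a
normalized system of `n` elements, then the entropy numbers of the octahedron
`A_1(D_n)` satisfy `ε_k(A_1(D_n), X) ≤ C(q,γ) (log₂(2n/k)/k)^{1 - 1/q}` for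
`k = 1,...,n`. -/
theorem stmt8 (q γ : ℝ) (hq1 : 1 < q) (hq2 : q ≤ 2) (hγ : 0 < γ) :
    ∃ C > 0, ∀ (X : Type) [NormedAddCommGroup X] [NormedSpace ℝ X] [CompleteSpace X],
      (∀ u : ℝ, 0 < u → modSmooth X u ≤ γ * u ^ q) →
      ∀ (n : ℕ) (g : Fin n → X), (∀ j, ‖g j‖ = 1) →
      ∀ k : ℕ, 1 ≤ k → k ≤ n →
      entropyNum {f : X | ∃ c : Fin n → ℝ, (∑ j, |c j|) ≤ 1 ∧ f = ∑ j, c j • g j} k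
        ≤ C * (Real.logb 2 (2 * n / k) / k) ^ (1 - 1 / q) := by
  have hB : 0 < smoothStepConst q γ ^ q⁻¹ :=
    rpow_pos_of_pos (one_pos.trans_le (one_le_smoothStepConst (by linarith) hγ.le)) _
  refine ⟨32 * smoothStepConst q γ ^ q⁻¹, by positivity, fun X _ _ _ hsm n g hg k hk hkn => ?_⟩
  rw [one_div]
  exact entropyNum_octahedron_le hq1.le hq2 hγ hsm (fun j => (hg j).le) hk hkn
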